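/- arXiv:nlin/0109009 — 3 statements merged into one kernel-verified Lean document; each statement's English description precedes it below -/
import Mathlib

section
/- Let ε = 1 or ε = −1. For smooth τ, η : ℝ → ℝ define vector fields on ℝ⁴ by T(τ)(x,y,t,u) = ( (1/3)τ′(t)x − (ε/6)τ″(t)y², (2/3)τ′(t)y, τ(t), −(2/3)τ′(t)u + (1/3)τ″(t)x − (ε/6)τ′″(t)y² ) and Y(η)(x,y,t,u) = ( −(ε/2)η′(t)y, η(t), 0, −(ε/2)η″(t)y ). Then the Lie bracket satisfies [T(τ), Y(η)] = Y(τη′ − (2/3)τ′η). -/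
/-- The Virasoro generator `T(τ)` of the KP symmetry algebra (equation (4.13) with
`b = c₀ = c₁ = 0`), as a vector field on ℝ⁴ with coordinates `(x, y, t, u)`. -/
noncomputable def T (ε : ℝ) (τ : ℝ → ℝ) (p : ℝ × ℝ × ℝ × ℝ) : ℝ × ℝ × ℝ × ℝ :=
  (1 / 3 * deriv τ p.2.2.1 * p.1 - ε / 6 * deriv (deriv τ) p.2.2.1 * p.2.1 ^ 2,
   2 / 3 * deriv τ p.2.2.1 * p.2.1,
   τ p.2.2.1,
   -(2 / 3) * deriv τ p.2.2.1 * p.2.2.2 + 1 / 3 * deriv (deriv τ) p.2.2.1 * p.1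
     - ε / 6 * deriv (deriv (deriv τ)) p.2.2.1 * p.2.1 ^ 2)

/-- The KP Kac–Moody generator `Y(η)` (equation (4.15) with `b = c₀ = c₁ = 0`),
as a vector field on ℝ⁴ with coordinates `(x, y, t, u)`. -/
noncomputable def Y (ε : ℝ) (η : ℝ → ℝ) (p : ℝ × ℝ × ℝ × ℝ) : ℝ × ℝ × ℝ × ℝ :=
  (-(ε / 2) * deriv η p.2.2.1 * p.2.1,
   η p.2.2.1,
   0,
   -(ε / 2) * deriv (deriv η) p.2.2.1 * p.2.1)

namespace KPaux

noncomputable def Px : (ℝ × ℝ × ℝ × ℝ) →L[ℝ] ℝ := ContinuousLinearMap.fst ℝ ℝ (ℝ × ℝ × ℝ)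
noncomputable def Py : (ℝ × ℝ × ℝ × ℝ) →L[ℝ] ℝ :=
  (ContinuousLinearMap.fst ℝ ℝ (ℝ × ℝ)).comp (ContinuousLinearMap.snd ℝ ℝ (ℝ × ℝ × ℝ))
noncomputable def Pt : (ℝ × ℝ × ℝ × ℝ) →L[ℝ] ℝ :=
  (ContinuousLinearMap.fst ℝ ℝ ℝ).comp
    ((ContinuousLinearMap.snd ℝ ℝ (ℝ × ℝ)).comp (ContinuousLinearMap.snd ℝ ℝ (ℝ × ℝ × ℝ)))
noncomputable def Pu : (ℝ × ℝ × ℝ × ℝ) →L[ℝ] ℝ :=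
  (ContinuousLinearMap.snd ℝ ℝ ℝ).comp
    ((ContinuousLinearMap.snd ℝ ℝ (ℝ × ℝ)).comp (ContinuousLinearMap.snd ℝ ℝ (ℝ × ℝ × ℝ)))

@[simp] lemma Px_apply (v : ℝ × ℝ × ℝ × ℝ) : Px v = v.1 := rfl
@[simp] lemma Py_apply (v : ℝ × ℝ × ℝ × ℝ) : Py v = v.2.1 := rfl
@[simp] lemma Pt_apply (v : ℝ × ℝ × ℝ × ℝ) : Pt v = v.2.2.1 := rfl
@[simp] lemma Pu_apply (v : ℝ × ℝ × ℝ × ℝ) : Pu v = v.2.2.2 := rfl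

lemma hasFDerivAt_coord (f : ℝ → ℝ) (hf : Differentiable ℝ f) (p : ℝ × ℝ × ℝ × ℝ) :
    HasFDerivAt (fun q : ℝ × ℝ × ℝ × ℝ => f q.2.2.1) (deriv f p.2.2.1 • Pt) p :=
  ((hf p.2.2.1).hasDerivAt).comp_hasFDerivAt p Pt.hasFDerivAt

end KPaux


open KPaux in
/-- `[T(τ), Y(η)] = Y(τη′ − (2/3)τ′η)`. -/
theorem stmt7 (ε : ℝ) (hε : ε = 1 ∨ ε = -1)
    (τ η : ℝ → ℝ) (hτ : ContDiff ℝ (⊤ : ℕ∞) τ) (hη : ContDiff ℝ (⊤ : ℕ∞) η) :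
    ∀ p : ℝ × ℝ × ℝ × ℝ,
      VectorField.lieBracket ℝ (T ε τ) (Y ε η) p
        = Y ε (fun t => τ t * deriv η t - 2 / 3 * deriv τ t * η t) p := by
  intro p
  -- differentiability of iterated derivatives
  have hτ' : ContDiff ℝ (↑(⊤:ℕ∞)) τ := hτ.of_le (by simp)
  have hτd : Differentiable ℝ τ := hτ'.differentiable (by simp)
  have hτ1 : ContDiff ℝ (↑(⊤:ℕ∞)) (deriv τ) := (contDiff_infty_iff_deriv.mp hτ').2
  have hτ1d : Differentiable ℝ (deriv τ) := hτ1.differentiable (by simp)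
  have hτ2 : ContDiff ℝ (↑(⊤:ℕ∞)) (deriv (deriv τ)) := (contDiff_infty_iff_deriv.mp hτ1).2
  have hτ2d : Differentiable ℝ (deriv (deriv τ)) := hτ2.differentiable (by simp)
  have hτ3 : ContDiff ℝ (↑(⊤:ℕ∞)) (deriv (deriv (deriv τ))) := (contDiff_infty_iff_deriv.mp hτ2).2
  have hτ3d : Differentiable ℝ (deriv (deriv (deriv τ))) := hτ3.differentiable (by simp)
  have hη' : ContDiff ℝ (↑(⊤:ℕ∞)) η := hη.of_le (by simp)
  have hηd : Differentiable ℝ η := hη'.differentiable (by simp)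
  have hη1 : ContDiff ℝ (↑(⊤:ℕ∞)) (deriv η) := (contDiff_infty_iff_deriv.mp hη').2
  have hη1d : Differentiable ℝ (deriv η) := hη1.differentiable (by simp)
  have hη2 : ContDiff ℝ (↑(⊤:ℕ∞)) (deriv (deriv η)) := (contDiff_infty_iff_deriv.mp hη1).2
  have hη2d : Differentiable ℝ (deriv (deriv η)) := hη2.differentiable (by simp)
  -- basic HasFDerivAt for coordinates
  have hx : HasFDerivAt (fun q : ℝ × ℝ × ℝ × ℝ => q.1) Px p := Px.hasFDerivAt
  have hy : HasFDerivAt (fun q : ℝ × ℝ × ℝ × ℝ => q.2.1) Py p := Py.hasFDerivAt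
  have hu : HasFDerivAt (fun q : ℝ × ℝ × ℝ × ℝ => q.2.2.2) Pu p := Pu.hasFDerivAt
  have hy2 : HasFDerivAt (fun q : ℝ × ℝ × ℝ × ℝ => q.2.1 ^ 2) (p.2.1 • Py + p.2.1 • Py) p := by
    simpa only [sq, Pi.mul_def] using hy.mul hy
  -- derivative of Y
  have hY : HasFDerivAt (Y ε η) _ p :=
    (((hasFDerivAt_coord (deriv η) hη1d p).const_mul (-(ε / 2))).mul hy).prodMk
      (((hasFDerivAt_coord η hηd p)).prodMk
        ((hasFDerivAt_const (0 : ℝ) p).prodMk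
          (((hasFDerivAt_coord (deriv (deriv η)) hη2d p).const_mul (-(ε / 2))).mul hy)))
  -- derivative of T
  have hT : HasFDerivAt (T ε τ) _ p :=
    ((((hasFDerivAt_coord (deriv τ) hτ1d p).const_mul (1 / 3)).mul hx).sub
        (((hasFDerivAt_coord (deriv (deriv τ)) hτ2d p).const_mul (ε / 6)).mul hy2)).prodMk
      (((((hasFDerivAt_coord (deriv τ) hτ1d p).const_mul (2 / 3)).mul hy)).prodMk
        ((hasFDerivAt_coord τ hτd p).prodMk
          (((((hasFDerivAt_coord (deriv τ) hτ1d p).const_mul (-(2 / 3))).mul hu).add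
              (((hasFDerivAt_coord (deriv (deriv τ)) hτ2d p).const_mul (1 / 3)).mul hx)).sub
            (((hasFDerivAt_coord (deriv (deriv (deriv τ))) hτ3d p).const_mul (ε / 6)).mul
              hy2))))
  -- derivatives of the combination
  set φ : ℝ → ℝ := fun t => τ t * deriv η t - 2 / 3 * deriv τ t * η t with hφdef
  have hφ' : ∀ s, HasDerivAt φ
      (deriv τ s * deriv η s + τ s * deriv (deriv η) s
        - ((2 / 3 * deriv (deriv τ) s) * η s + (2 / 3 * deriv τ s) * deriv η s)) s := by
    intro s
    exact ((hτd s).hasDerivAt.mul (hη1d s).hasDerivAt).sub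
      ((HasDerivAt.const_mul (2 / 3 : ℝ) (hτ1d s).hasDerivAt).mul (hηd s).hasDerivAt)
  have hdφ : deriv φ = fun s =>
      deriv τ s * deriv η s + τ s * deriv (deriv η) s
        - ((2 / 3 * deriv (deriv τ) s) * η s + (2 / 3 * deriv τ s) * deriv η s) :=
    funext fun s => (hφ' s).deriv
  have hddφ : deriv (deriv φ) p.2.2.1 =
      (deriv (deriv τ) p.2.2.1 * deriv η p.2.2.1 + deriv τ p.2.2.1 * deriv (deriv η) p.2.2.1
        + (deriv τ p.2.2.1 * deriv (deriv η) p.2.2.1 + τ p.2.2.1 * deriv (deriv (deriv η)) p.2.2.1))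
      - ((2 / 3 * deriv (deriv (deriv τ)) p.2.2.1 * η p.2.2.1
            + 2 / 3 * deriv (deriv τ) p.2.2.1 * deriv η p.2.2.1)
         + (2 / 3 * deriv (deriv τ) p.2.2.1 * deriv η p.2.2.1
            + 2 / 3 * deriv τ p.2.2.1 * deriv (deriv η) p.2.2.1)) := by
    rw [hdφ]
    have h : HasDerivAt (fun s =>
        deriv τ s * deriv η s + τ s * deriv (deriv η) s
          - ((2 / 3 * deriv (deriv τ) s) * η s + (2 / 3 * deriv τ s) * deriv η s)) _ p.2.2.1 :=
      (((hτ1d _).hasDerivAt.mul (hη1d _).hasDerivAt).add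
          ((hτd _).hasDerivAt.mul (hη2d _).hasDerivAt)).sub
        (((HasDerivAt.const_mul (2 / 3 : ℝ) (hτ2d _).hasDerivAt).mul (hηd _).hasDerivAt).add
          ((HasDerivAt.const_mul (2 / 3 : ℝ) (hτ1d _).hasDerivAt).mul (hη1d _).hasDerivAt))
    simpa using h.deriv
  show fderiv ℝ (Y ε η) p (T ε τ p) - fderiv ℝ (T ε τ) p (Y ε η p) = _
  rw [hY.fderiv, hT.fderiv]
  simp only [T, Y, hddφ, (hφ' p.2.2.1).deriv, ContinuousLinearMap.prod_apply, ContinuousLinearMap.add_apply,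
    ContinuousLinearMap.sub_apply, ContinuousLinearMap.smul_apply, ContinuousLinearMap.zero_apply,
    Px_apply, Py_apply, Pt_apply, Pu_apply, smul_eq_mul, Prod.mk_sub_mk, Prod.mk.injEq]
  refine ⟨by ring, by ring, by ring, by ring⟩
end

section
/- Let ε = 1 or ε = −1 and let b, ξ : ℝ → ℝ be smooth. Define η(t) := exp( ∫_0^t b(s) ds ) and let β : ℝ → ℝ be smooth with β′(t) = −ε ξ(t)²/η(t)² for all t. Suppose the smooth function w : ℝ² → ℝ satisfies the Korteweg–de Vries equation w_t(z,t) + w(z,t) w_z(z,t) + w_zzz(z,t) = 0 at every point of ℝ². Then the function u(x,y,t) := (ξ′(t)/η(t))·y + w( x − (ξ(t)/η(t))·y + β(t), t ) satisfies (u_t + u u_x + u_xxx)_x + ε u_yy + b(t)·y·u_xy = 0 at every point of ℝ³. -/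
/-- Partial derivative in the first (x) variable. -/
noncomputable def px (u : ℝ → ℝ → ℝ → ℝ) (x y t : ℝ) : ℝ := deriv (fun s => u s y t) x
/-- Partial derivative in the second (y) variable. -/
noncomputable def py (u : ℝ → ℝ → ℝ → ℝ) (x y t : ℝ) : ℝ := deriv (fun s => u x s t) y
/-- Partial derivative in the third (t) variable. -/
noncomputable def pt (u : ℝ → ℝ → ℝ → ℝ) (x y t : ℝ) : ℝ := deriv (fun s => u x y s) t

/-- Partial derivative of a function of `(z, t)` in the first (z) variable. -/
noncomputable def qz (F : ℝ → ℝ → ℝ) (z t : ℝ) : ℝ := deriv (fun s => F s t) z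
/-- Partial derivative of a function of `(z, t)` in the second (t) variable. -/
noncomputable def qt (F : ℝ → ℝ → ℝ) (z t : ℝ) : ℝ := deriv (fun s => F z s) t

/-- Smoothness of a function of two real variables. -/
def Smooth2 (F : ℝ → ℝ → ℝ) : Prop :=
  ContDiff ℝ (⊤ : ℕ∞) (fun p : ℝ × ℝ => F p.1 p.2)

open scoped ContDiff

/-- Uncurried version of a two-variable function. -/
noncomputable def uc (F : ℝ → ℝ → ℝ) : ℝ × ℝ → ℝ := fun p => F p.1 p.2

lemma hasDerivAt_fst {F : ℝ → ℝ → ℝ} (hF : ContDiff ℝ ∞ (uc F)) (z t : ℝ) :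
    HasDerivAt (fun s => F s t) (fderiv ℝ (uc F) (z, t) (1, 0)) z := by
  have hline : HasDerivAt (fun s : ℝ => ((s, t) : ℝ × ℝ)) ((1:ℝ), (0:ℝ)) z :=
    (hasDerivAt_id z).prodMk (hasDerivAt_const z t)
  have hFd : HasFDerivAt (uc F) (fderiv ℝ (uc F) (z, t)) (z, t) :=
    (hF.differentiable (by norm_num) (z, t)).hasFDerivAt
  exact hFd.comp_hasDerivAt z hline

lemma hasDerivAt_snd {F : ℝ → ℝ → ℝ} (hF : ContDiff ℝ ∞ (uc F)) (z t : ℝ) :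
    HasDerivAt (fun s => F z s) (fderiv ℝ (uc F) (z, t) (0, 1)) t := by
  have hline : HasDerivAt (fun s : ℝ => ((z, s) : ℝ × ℝ)) ((0:ℝ), (1:ℝ)) t :=
    (hasDerivAt_const t z).prodMk (hasDerivAt_id t)
  have hFd : HasFDerivAt (uc F) (fderiv ℝ (uc F) (z, t)) (z, t) :=
    (hF.differentiable (by norm_num) (z, t)).hasFDerivAt
  exact hFd.comp_hasDerivAt t hline

lemma qz_eq {F : ℝ → ℝ → ℝ} (hF : ContDiff ℝ ∞ (uc F)) (z t : ℝ) :
    qz F z t = fderiv ℝ (uc F) (z, t) (1, 0) := (hasDerivAt_fst hF z t).deriv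

lemma qt_eq {F : ℝ → ℝ → ℝ} (hF : ContDiff ℝ ∞ (uc F)) (z t : ℝ) :
    qt F z t = fderiv ℝ (uc F) (z, t) (0, 1) := (hasDerivAt_snd hF z t).deriv

lemma hdz {F : ℝ → ℝ → ℝ} (hF : ContDiff ℝ ∞ (uc F)) (z t : ℝ) :
    HasDerivAt (fun s => F s t) (qz F z t) z := by
  rw [qz_eq hF]; exact hasDerivAt_fst hF z t

lemma hdt {F : ℝ → ℝ → ℝ} (hF : ContDiff ℝ ∞ (uc F)) (z t : ℝ) :
    HasDerivAt (fun s => F z s) (qt F z t) t := by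
  rw [qt_eq hF]; exact hasDerivAt_snd hF z t

lemma comp2 {F : ℝ → ℝ → ℝ} (hF : ContDiff ℝ ∞ (uc F)) {g h : ℝ → ℝ} {g' h' r : ℝ}
    (hg : HasDerivAt g g' r) (hh : HasDerivAt h h' r) :
    HasDerivAt (fun s => F (g s) (h s)) (qz F (g r) (h r) * g' + qt F (g r) (h r) * h') r := by
  have hline : HasDerivAt (fun s : ℝ => ((g s, h s) : ℝ × ℝ)) ((g', h')) r := hg.prodMk hh
  have hFd : HasFDerivAt (uc F) (fderiv ℝ (uc F) (g r, h r)) (g r, h r) :=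
    (hF.differentiable (by norm_num) _).hasFDerivAt
  have h1 := hFd.comp_hasDerivAt r hline
  have h2 : ((g', h') : ℝ × ℝ) = g' • ((1:ℝ), (0:ℝ)) + h' • ((0:ℝ), (1:ℝ)) := by
    simp [Prod.ext_iff]
  rw [h2, map_add, map_smul, map_smul] at h1
  simpa [qz_eq hF, qt_eq hF, smul_eq_mul, mul_comm, Function.comp_def, uc] using h1

lemma smooth_qz {F : ℝ → ℝ → ℝ} (hF : ContDiff ℝ ∞ (uc F)) : ContDiff ℝ ∞ (uc (qz F)) := by
  have h1 : ContDiff ℝ ∞ (fderiv ℝ (uc F)) := (contDiff_infty_iff_fderiv.mp hF).2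
  have h2 : ContDiff ℝ ∞ (fun p : ℝ × ℝ => fderiv ℝ (uc F) p ((1:ℝ), (0:ℝ))) :=
    (ContinuousLinearMap.apply ℝ ℝ (((1:ℝ), (0:ℝ)) : ℝ × ℝ)).contDiff.comp h1
  have h3 : (fun p : ℝ × ℝ => qz F p.1 p.2) =
      fun p : ℝ × ℝ => fderiv ℝ (uc F) p ((1:ℝ), (0:ℝ)) := by
    funext p
    rw [show p = (p.1, p.2) from rfl, qz_eq hF]
  unfold uc
  rw [h3]; exact h2

lemma smooth_qt {F : ℝ → ℝ → ℝ} (hF : ContDiff ℝ ∞ (uc F)) : ContDiff ℝ ∞ (uc (qt F)) := by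
  have h1 : ContDiff ℝ ∞ (fderiv ℝ (uc F)) := (contDiff_infty_iff_fderiv.mp hF).2
  have h2 : ContDiff ℝ ∞ (fun p : ℝ × ℝ => fderiv ℝ (uc F) p ((0:ℝ), (1:ℝ))) :=
    (ContinuousLinearMap.apply ℝ ℝ (((0:ℝ), (1:ℝ)) : ℝ × ℝ)).contDiff.comp h1
  have h3 : (fun p : ℝ × ℝ => qt F p.1 p.2) =
      fun p : ℝ × ℝ => fderiv ℝ (uc F) p ((0:ℝ), (1:ℝ)) := by
    funext p
    rw [show p = (p.1, p.2) from rfl, qt_eq hF]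
  unfold uc
  rw [h3]; exact h2

/-- via the reduction (6.6)–(6.9) with `η′/η = b` and `β′ = −εξ²/η²`,
any solution of the KdV equation yields a solution of the generalized KP equation
`(u_t + u u_x + u_xxx)_x + ε u_yy + b(t) y u_xy = 0`. -/
theorem stmt15 (ε : ℝ) (hε : ε = 1 ∨ ε = -1)
    (b ξ : ℝ → ℝ) (hb : ContDiff ℝ (⊤ : ℕ∞) b) (hξ : ContDiff ℝ (⊤ : ℕ∞) ξ)
    (η : ℝ → ℝ) (hη : η = fun t => Real.exp (∫ s in (0:ℝ)..t, b s))
    (β : ℝ → ℝ) (hβsmooth : ContDiff ℝ (⊤ : ℕ∞) β)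
    (hβ : ∀ t, deriv β t = -ε * (ξ t) ^ 2 / (η t) ^ 2)
    (w : ℝ → ℝ → ℝ) (hw : Smooth2 w)
    (hKdV : ∀ z t : ℝ, qt w z t + w z t * qz w z t + qz (qz (qz w)) z t = 0)
    (u : ℝ → ℝ → ℝ → ℝ)
    (hu : u = fun x y t => deriv ξ t / η t * y + w (x - ξ t / η t * y + β t) t) :
    ∀ x y t : ℝ,
      px (fun x y t => pt u x y t + u x y t * px u x y t + px (px (px u)) x y t) x y t
        + ε * py (py u) x y t + b t * y * px (py u) x y t = 0 := by
  -- smoothness of w and its partial derivatives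
  have hW : ContDiff ℝ ∞ (uc w) := hw.of_le (by simp)
  have hW1 : ContDiff ℝ ∞ (uc (qz w)) := smooth_qz hW
  have hW2 : ContDiff ℝ ∞ (uc (qz (qz w))) := smooth_qz hW1
  have hW3 : ContDiff ℝ ∞ (uc (qz (qz (qz w)))) := smooth_qz hW2
  have hWt : ContDiff ℝ ∞ (uc (qt w)) := smooth_qt hW
  -- properties of η
  have hbc : Continuous b := hb.continuous
  have hI : ∀ r : ℝ, HasDerivAt (fun t : ℝ => ∫ s in (0:ℝ)..t, b s) (b r) r := fun r =>
    intervalIntegral.integral_hasDerivAt_right (hbc.intervalIntegrable 0 r)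
      hbc.stronglyMeasurable.stronglyMeasurableAtFilter hbc.continuousAt
  have hηd : ∀ r : ℝ, HasDerivAt η (b r * η r) r := by
    intro r
    rw [hη]
    simpa [mul_comm] using (hI r).exp
  have hηne : ∀ r : ℝ, η r ≠ 0 := by
    intro r; rw [hη]; exact (Real.exp_pos _).ne'
  have hηsm : ContDiff ℝ ∞ η := by
    rw [hη]
    refine Real.contDiff_exp.comp ?_
    refine contDiff_infty_iff_deriv.mpr ⟨fun r => (hI r).differentiableAt, ?_⟩
    have : deriv (fun t : ℝ => ∫ s in (0:ℝ)..t, b s) = b := funext fun r => (hI r).deriv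
    rw [this]; exact hb.of_le (by simp)
  have hξ' : ContDiff ℝ ∞ (deriv ξ) := (contDiff_infty_iff_deriv.mp (hξ.of_le (by simp))).2
  have ha : ContDiff ℝ ∞ (fun r => deriv ξ r / η r) := hξ'.div hηsm hηne
  -- derivative of c = ξ/η
  have hcd : ∀ r : ℝ, HasDerivAt (fun r => ξ r / η r)
      (deriv ξ r / η r - b r * (ξ r / η r)) r := by
    intro r
    have h := ((hξ.differentiable (by norm_num) r).hasDerivAt).div (hηd r) (hηne r)
    refine (h : HasDerivAt (fun r => ξ r / η r) _ r).congr_deriv ?_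
    field_simp [hηne r]
  -- first x-derivative of u
  have hinx : ∀ (y t x : ℝ), HasDerivAt (fun s : ℝ => s - ξ t / η t * y + β t) 1 x := by
    intro y t x
    simpa using ((hasDerivAt_id x).sub_const (ξ t / η t * y)).add_const (β t)
  have hpx : ∀ x y t : ℝ, px u x y t = qz w (x - ξ t / η t * y + β t) t := by
    intro x y t
    have h : HasDerivAt (fun s => deriv ξ t / η t * y + w (s - ξ t / η t * y + β t) t)
        (qz w (x - ξ t / η t * y + β t) t * 1) x :=
      (((hdz hW (x - ξ t / η t * y + β t) t).comp x (hinx y t x))).const_add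
        (deriv ξ t / η t * y)
    simp only [px, hu]
    rw [h.deriv, mul_one]
  have hpxx : ∀ x y t : ℝ, px (px u) x y t = qz (qz w) (x - ξ t / η t * y + β t) t := by
    intro x y t
    have hfun : (fun s => px u s y t) = fun s => qz w (s - ξ t / η t * y + β t) t :=
      funext fun s => hpx s y t
    have h : HasDerivAt (fun s => qz w (s - ξ t / η t * y + β t) t)
        (qz (qz w) (x - ξ t / η t * y + β t) t * 1) x :=
      (hdz hW1 (x - ξ t / η t * y + β t) t).comp x (hinx y t x)
    have hss : px (px u) x y t = deriv (fun s => px u s y t) x := rfl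
    rw [hss, hfun, h.deriv, mul_one]
  have hpxxx : ∀ x y t : ℝ,
      px (px (px u)) x y t = qz (qz (qz w)) (x - ξ t / η t * y + β t) t := by
    intro x y t
    have hfun : (fun s => px (px u) s y t) = fun s => qz (qz w) (s - ξ t / η t * y + β t) t :=
      funext fun s => hpxx s y t
    have h : HasDerivAt (fun s => qz (qz w) (s - ξ t / η t * y + β t) t)
        (qz (qz (qz w)) (x - ξ t / η t * y + β t) t * 1) x :=
      (hdz hW2 (x - ξ t / η t * y + β t) t).comp x (hinx y t x)
    have hss : px (px (px u)) x y t = deriv (fun s => px (px u) s y t) x := rfl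
    rw [hss, hfun, h.deriv, mul_one]
  -- first y-derivative of u
  have hiny : ∀ (x t y : ℝ), HasDerivAt (fun s : ℝ => x - ξ t / η t * s + β t)
      (-(ξ t / η t)) y := by
    intro x t y
    have h := (((hasDerivAt_id y).const_mul (ξ t / η t)).const_sub x).add_const (β t)
    simpa using h
  have hpy : ∀ x y t : ℝ, py u x y t =
      deriv ξ t / η t + qz w (x - ξ t / η t * y + β t) t * (-(ξ t / η t)) := by
    intro x y t
    have h : HasDerivAt (fun s => deriv ξ t / η t * s + w (x - ξ t / η t * s + β t) t)
        (deriv ξ t / η t * 1 + qz w (x - ξ t / η t * y + β t) t * (-(ξ t / η t))) y :=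
      (((hasDerivAt_id y).const_mul (deriv ξ t / η t))).add
        ((hdz hW (x - ξ t / η t * y + β t) t).comp y (hiny x t y) :)
    simp only [py, hu]
    rw [h.deriv, mul_one]
  -- time derivative of u
  have hpt : ∀ x y t : ℝ, pt u x y t =
      deriv (fun r => deriv ξ r / η r) t * y +
        (qz w (x - ξ t / η t * y + β t) t *
            (-((deriv ξ t / η t - b t * (ξ t / η t)) * y) + deriv β t) +
          qt w (x - ξ t / η t * y + β t) t * 1) := by
    intro x y t
    have hg : HasDerivAt (fun r => x - ξ r / η r * y + β r)
        (-((deriv ξ t / η t - b t * (ξ t / η t)) * y) + deriv β t) t :=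
      (((hcd t).mul_const y).const_sub x).add
        ((hβsmooth.differentiable (by norm_num) t).hasDerivAt)
    have hwpart := comp2 hW hg (hasDerivAt_id t)
    have hapart : HasDerivAt (fun r => deriv ξ r / η r * y)
        (deriv (fun r => deriv ξ r / η r) t * y) t :=
      ((ha.differentiable (by norm_num) t).hasDerivAt).mul_const y
    have h := hapart.add hwpart
    simp only [pt, hu]
    exact h.deriv
  -- now fix the point
  intro x y t
  -- second y-derivative
  have hpyy : py (py u) x y t =
      qz (qz w) (x - ξ t / η t * y + β t) t * (-(ξ t / η t)) * (-(ξ t / η t)) := by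
    have hfun : (fun s => py u x s t) =
        fun s => deriv ξ t / η t + qz w (x - ξ t / η t * s + β t) t * (-(ξ t / η t)) :=
      funext fun s => hpy x s t
    have h : HasDerivAt
        (fun s => deriv ξ t / η t + qz w (x - ξ t / η t * s + β t) t * (-(ξ t / η t)))
        (qz (qz w) (x - ξ t / η t * y + β t) t * (-(ξ t / η t)) * (-(ξ t / η t))) y :=
      ((((hdz hW1 (x - ξ t / η t * y + β t) t).comp y (hiny x t y))).mul_const
        (-(ξ t / η t))).const_add (deriv ξ t / η t)
    have hss : py (py u) x y t = deriv (fun s => py u x s t) y := rfl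
    rw [hss, hfun]
    exact h.deriv
  -- mixed x y derivative
  have hpxy : px (py u) x y t =
      qz (qz w) (x - ξ t / η t * y + β t) t * 1 * (-(ξ t / η t)) := by
    have hfun : (fun s => py u s y t) =
        fun s => deriv ξ t / η t + qz w (s - ξ t / η t * y + β t) t * (-(ξ t / η t)) :=
      funext fun s => hpy s y t
    have h : HasDerivAt
        (fun s => deriv ξ t / η t + qz w (s - ξ t / η t * y + β t) t * (-(ξ t / η t)))
        (qz (qz w) (x - ξ t / η t * y + β t) t * 1 * (-(ξ t / η t))) x :=
      ((((hdz hW1 (x - ξ t / η t * y + β t) t).comp x (hinx y t x))).mul_const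
        (-(ξ t / η t))).const_add (deriv ξ t / η t)
    have hss : px (py u) x y t = deriv (fun s => py u s y t) x := rfl
    rw [hss, hfun]
    exact h.deriv
  -- x-derivative of the KP bracket
  have hΦfun : (fun s => pt u s y t + u s y t * px u s y t + px (px (px u)) s y t) =
      fun s => (deriv (fun r => deriv ξ r / η r) t * y +
          (qz w (s - ξ t / η t * y + β t) t *
              (-((deriv ξ t / η t - b t * (ξ t / η t)) * y) + deriv β t) +
            qt w (s - ξ t / η t * y + β t) t * 1)) +
        (deriv ξ t / η t * y + w (s - ξ t / η t * y + β t) t) *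
          qz w (s - ξ t / η t * y + β t) t +
        qz (qz (qz w)) (s - ξ t / η t * y + β t) t := by
    funext s
    rw [hpt s y t, hpx s y t, hpxxx s y t, hu]
  have hΦ : px (fun x y t => pt u x y t + u x y t * px u x y t + px (px (px u)) x y t) x y t =
      (qz (qz w) (x - ξ t / η t * y + β t) t * 1 *
          (-((deriv ξ t / η t - b t * (ξ t / η t)) * y) + deriv β t) +
        qz (qt w) (x - ξ t / η t * y + β t) t * 1 * 1) +
      (qz w (x - ξ t / η t * y + β t) t * 1 *
          qz w (x - ξ t / η t * y + β t) t +
        (deriv ξ t / η t * y + w (x - ξ t / η t * y + β t) t) *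
          (qz (qz w) (x - ξ t / η t * y + β t) t * 1)) +
      qz (qz (qz (qz w))) (x - ξ t / η t * y + β t) t * 1 := by
    have h1 : HasDerivAt
        (fun s => qz w (s - ξ t / η t * y + β t) t *
            (-((deriv ξ t / η t - b t * (ξ t / η t)) * y) + deriv β t) +
          qt w (s - ξ t / η t * y + β t) t * 1)
        (qz (qz w) (x - ξ t / η t * y + β t) t * 1 *
            (-((deriv ξ t / η t - b t * (ξ t / η t)) * y) + deriv β t) +
          qz (qt w) (x - ξ t / η t * y + β t) t * 1 * 1) x :=
      (((hdz hW1 (x - ξ t / η t * y + β t) t).comp x (hinx y t x)).mul_const _).add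
        ((((hdz hWt (x - ξ t / η t * y + β t) t).comp x (hinx y t x)).mul_const 1 :))
    have h2 : HasDerivAt
        (fun s => (deriv ξ t / η t * y + w (s - ξ t / η t * y + β t) t) *
            qz w (s - ξ t / η t * y + β t) t)
        (qz w (x - ξ t / η t * y + β t) t * 1 *
            qz w (x - ξ t / η t * y + β t) t +
          (deriv ξ t / η t * y + w (x - ξ t / η t * y + β t) t) *
            (qz (qz w) (x - ξ t / η t * y + β t) t * 1)) x :=
      ((((hdz hW (x - ξ t / η t * y + β t) t).comp x (hinx y t x))).const_add
          (deriv ξ t / η t * y)).mul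
        ((hdz hW1 (x - ξ t / η t * y + β t) t).comp x (hinx y t x))
    have h3 : HasDerivAt (fun s => qz (qz (qz w)) (s - ξ t / η t * y + β t) t)
        (qz (qz (qz (qz w))) (x - ξ t / η t * y + β t) t * 1) x :=
      (hdz hW3 (x - ξ t / η t * y + β t) t).comp x (hinx y t x)
    have h := ((h1.const_add (deriv (fun r => deriv ξ r / η r) t * y)).add h2).add h3
    have hss : px (fun x y t => pt u x y t + u x y t * px u x y t + px (px (px u)) x y t) x y t
        = deriv (fun s => pt u s y t + u s y t * px u s y t + px (px (px u)) s y t) x := rfl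
    rw [hss, hΦfun]
    exact h.deriv
  -- differentiated KdV equation
  have hK4 : qz (qt w) (x - ξ t / η t * y + β t) t +
      (qz w (x - ξ t / η t * y + β t) t * qz w (x - ξ t / η t * y + β t) t +
        w (x - ξ t / η t * y + β t) t * qz (qz w) (x - ξ t / η t * y + β t) t) +
      qz (qz (qz (qz w))) (x - ξ t / η t * y + β t) t = 0 := by
    set z := x - ξ t / η t * y + β t with hz
    have hzero : (fun s => qt w s t + w s t * qz w s t + qz (qz (qz w)) s t) =
        fun _ : ℝ => (0:ℝ) := funext fun s => hKdV s t
    have hD : HasDerivAt (fun s => qt w s t + w s t * qz w s t + qz (qz (qz w)) s t)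
        (qz (qt w) z t + (qz w z t * qz w z t + w z t * qz (qz w) z t) +
          qz (qz (qz (qz w))) z t) z :=
      ((hdz hWt z t).add ((hdz hW z t).mul (hdz hW1 z t))).add (hdz hW3 z t)
    rw [hzero] at hD
    have h0 := hD.deriv
    simpa using h0.symm
  -- value of β'
  have hB : deriv β t = -ε * (ξ t / η t) ^ 2 := by
    rw [hβ t, div_pow]
    ring
  rw [hΦ, hpyy, hpxy, hB]
  linear_combination hK4
end

section
/- Let ε = 1 or ε = −1, let b, c, ξ : ℝ → ℝ be smooth, and let η : ℝ → ℝ be smooth with η(t) ≠ 0 for all t. Suppose the smooth function F : ℝ² → ℝ satisfies (F_t + F F_z + F_zzz)_z + ε (ξ(t)²/η(t)²) F_zz + (1/2)(η′(t)/η(t) − b(t)) F_z − 2c(t)ε + (1/2)(b′(t) + b(t)² − η″(t)/η(t)) = 0 at every point of ℝ². Define u(x,y,t) := [ −c(t) + (ε/4)(b′(t) + b(t)² − η″(t)/η(t)) ]·y² + (ξ′(t)/η(t))·y + F( x + (ε/4)(η′(t)/η(t) − b(t))·y² − (ξ(t)/η(t))·y , t ). Then u satisfies (u_t + u u_x + u_xxx)_x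 + ε u_yy + b(t)·y·u_xy + c(t)·y²·u_xx = 0 at every point of ℝ³. -/
open ContDiff
set_option maxHeartbeats 1000000

def S2 (F : ℝ → ℝ → ℝ) : Prop := ContDiff ℝ ∞ (fun p : ℝ × ℝ => F p.1 p.2)

lemma Smooth2.s2 {F : ℝ → ℝ → ℝ} (h : Smooth2 F) : S2 F := ContDiff.of_le h (by simp)

lemma qz_eq_s17 (F : ℝ → ℝ → ℝ) (hF : S2 F) (z t : ℝ) :
    qz F z t = fderiv ℝ (fun p : ℝ × ℝ => F p.1 p.2) (z, t) (1, 0) := by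
  have hd := ((hF.differentiable (by simp)) (z, t)).hasFDerivAt
  have hc : HasDerivAt (fun s : ℝ => (s, t)) ((1 : ℝ), (0 : ℝ)) z :=
    (hasDerivAt_id z).prodMk (hasDerivAt_const z t)
  exact (hd.comp_hasDerivAt z hc).deriv

lemma qt_eq_s17 (F : ℝ → ℝ → ℝ) (hF : S2 F) (z t : ℝ) :
    qt F z t = fderiv ℝ (fun p : ℝ × ℝ => F p.1 p.2) (z, t) (0, 1) := by
  have hd := ((hF.differentiable (by simp)) (z, t)).hasFDerivAt
  have hc : HasDerivAt (fun s : ℝ => (z, s)) ((0 : ℝ), (1 : ℝ)) t :=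
    (hasDerivAt_const t z).prodMk (hasDerivAt_id t)
  exact (hd.comp_hasDerivAt t hc).deriv

lemma S2_qz (F : ℝ → ℝ → ℝ) (hF : S2 F) : S2 (qz F) := by
  have h1 : (fun p : ℝ × ℝ => qz F p.1 p.2)
      = fun p : ℝ × ℝ => fderiv ℝ (fun q : ℝ × ℝ => F q.1 q.2) p (1, 0) := by
    funext p
    rw [show p = (p.1, p.2) from rfl] at *
    exact qz_eq_s17 F hF p.1 p.2
  rw [S2, h1]
  exact (hF.fderiv_right (by simp)).clm_apply contDiff_const

lemma S2_qt (F : ℝ → ℝ → ℝ) (hF : S2 F) : S2 (qt F) := by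
  have h1 : (fun p : ℝ × ℝ => qt F p.1 p.2)
      = fun p : ℝ × ℝ => fderiv ℝ (fun q : ℝ × ℝ => F q.1 q.2) p (0, 1) := by
    funext p
    rw [show p = (p.1, p.2) from rfl] at *
    exact qt_eq_s17 F hF p.1 p.2
  rw [S2, h1]
  exact (hF.fderiv_right (by simp)).clm_apply contDiff_const

lemma chain2 {F : ℝ → ℝ → ℝ} (hF : S2 F) {zc tc : ℝ → ℝ} {z' t' τ : ℝ}
    (hz : HasDerivAt zc z' τ) (ht : HasDerivAt tc t' τ) :
    HasDerivAt (fun s => F (zc s) (tc s))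
      (qz F (zc τ) (tc τ) * z' + qt F (zc τ) (tc τ) * t') τ := by
  have hd := ((hF.differentiable (by simp)) (zc τ, tc τ)).hasFDerivAt
  have hc : HasDerivAt (fun s => (zc s, tc s)) (z', t') τ := hz.prodMk ht
  have h := hd.comp_hasDerivAt τ hc
  refine h.congr_deriv ?_
  symm
  rw [qz_eq_s17 F hF, qt_eq_s17 F hF]
  have e : ((z' : ℝ), (t' : ℝ)) = z' • ((1 : ℝ), (0 : ℝ)) + t' • ((0 : ℝ), (1 : ℝ)) := by
    simp [Prod.ext_iff]
  rw [e, map_add, map_smul, map_smul]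
  simp [smul_eq_mul]
  ring

/-- x-direction derivative through an affine shift. -/
lemma hderx (G : ℝ → ℝ → ℝ) (hG : S2 G) (a k t x : ℝ) :
    HasDerivAt (fun r => G (r + a - k) t) (qz G (x + a - k) t) x := by
  have h := chain2 hG (((hasDerivAt_id x).add_const a).sub_const k) (hasDerivAt_const x t)
  simpa using h

/-- y-direction derivative through the quadratic shift. -/
lemma hdery (G : ℝ → ℝ → ℝ) (hG : S2 G) (x p q t y : ℝ) :
    HasDerivAt (fun r => G (x + p * r ^ 2 - q * r) t)
      (qz G (x + p * y ^ 2 - q * y) t * (2 * p * y - q)) y := by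
  have hzc : HasDerivAt (fun r : ℝ => x + p * r ^ 2 - q * r) (2 * p * y - q) y := by
    have h := (((hasDerivAt_pow 2 y).const_mul p).const_add x).sub
      ((hasDerivAt_id y).const_mul q)
    refine h.congr_deriv ?_
    push_cast
    ring
  have h := chain2 hG hzc (hasDerivAt_const y t)
  simpa using h

/-- z-direction derivative at a point. -/
lemma hderz (G : ℝ → ℝ → ℝ) (hG : S2 G) (z t : ℝ) :
    HasDerivAt (fun s => G s t) (qz G z t) z := by
  have h := chain2 hG (hasDerivAt_id z) (hasDerivAt_const z t)
  simpa using h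

/-- if `F` solves the reduced equation (6.7), then the invariant ansatz
(6.6) solves the generalized KP equation (5.7) with `b₁ = b`, `c₂ = c`,
`b₀ = c₁ = c₀ = 0`. -/
theorem stmt17 (ε : ℝ) (hε : ε = 1 ∨ ε = -1)
    (b c ξ : ℝ → ℝ) (hb : ContDiff ℝ (⊤ : ℕ∞) b) (hc : ContDiff ℝ (⊤ : ℕ∞) c) (hξ : ContDiff ℝ (⊤ : ℕ∞) ξ)
    (η : ℝ → ℝ) (hη : ContDiff ℝ (⊤ : ℕ∞) η) (hη0 : ∀ t, η t ≠ 0)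
    (F : ℝ → ℝ → ℝ) (hF : Smooth2 F)
    (hred : ∀ z t : ℝ,
      qz (fun z t => qt F z t + F z t * qz F z t + qz (qz (qz F)) z t) z t
        + ε * ((ξ t) ^ 2 / (η t) ^ 2) * qz (qz F) z t
        + 1 / 2 * (deriv η t / η t - b t) * qz F z t
        - 2 * c t * ε
        + 1 / 2 * (deriv b t + (b t) ^ 2 - deriv (deriv η) t / η t) = 0)
    (u : ℝ → ℝ → ℝ → ℝ)
    (hu : u = fun x y t =>
      (-c t + ε / 4 * (deriv b t + (b t) ^ 2 - deriv (deriv η) t / η t)) * y ^ 2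
        + deriv ξ t / η t * y
        + F (x + ε / 4 * (deriv η t / η t - b t) * y ^ 2 - ξ t / η t * y) t) :
    ∀ x y t : ℝ,
      px (fun x y t => pt u x y t + u x y t * px u x y t + px (px (px u)) x y t) x y t
        + ε * py (py u) x y t + b t * y * px (py u) x y t
        + c t * y ^ 2 * px (px u) x y t = 0 := by
  intro x y t
  have hF' : S2 F := hF.s2
  have hF1 : S2 (qz F) := S2_qz F hF'
  have hF2 : S2 (qz (qz F)) := S2_qz _ hF1
  have hF3 : S2 (qz (qz (qz F))) := S2_qz _ hF2
  have hFt : S2 (qt F) := S2_qt F hF'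
  -- one-variable smoothness of coefficient functions
  have hb1 : ContDiff ℝ ∞ b := hb.of_le (by simp)
  have hc1' : ContDiff ℝ ∞ c := hc.of_le (by simp)
  have hξ1 : ContDiff ℝ ∞ ξ := hξ.of_le (by simp)
  have hη1 : ContDiff ℝ ∞ η := hη.of_le (by simp)
  have hDb : ContDiff ℝ ∞ (deriv b) := by simpa using hb1.iterate_deriv 1
  have hDξ : ContDiff ℝ ∞ (deriv ξ) := by simpa using hξ1.iterate_deriv 1
  have hDη : ContDiff ℝ ∞ (deriv η) := by simpa using hη1.iterate_deriv 1
  have hDDη : ContDiff ℝ ∞ (deriv (deriv η)) := by simpa using hη1.iterate_deriv 2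
  -- abstract coefficient functions
  obtain ⟨P, hP⟩ : ∃ P : ℝ → ℝ, P = fun s => ε / 4 * (deriv η s / η s - b s) := ⟨_, rfl⟩
  obtain ⟨Q, hQ⟩ : ∃ Q : ℝ → ℝ, Q = fun s => ξ s / η s := ⟨_, rfl⟩
  obtain ⟨A, hA⟩ : ∃ A : ℝ → ℝ,
    A = fun s => -c s + ε / 4 * (deriv b s + (b s) ^ 2 - deriv (deriv η) s / η s) := ⟨_, rfl⟩
  obtain ⟨B, hB⟩ : ∃ B : ℝ → ℝ, B = fun s => deriv ξ s / η s := ⟨_, rfl⟩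
  have hu' : u = fun x y s => A s * y ^ 2 + B s * y + F (x + P s * y ^ 2 - Q s * y) s := by
    simp only [hu, hP, hQ, hA, hB]
  -- derivatives of coefficient functions at t
  have hηd : HasDerivAt η (deriv η t) t := ((hη1.differentiable (by simp)) t).hasDerivAt
  have hDηd : HasDerivAt (deriv η) (deriv (deriv η) t) t :=
    ((hDη.differentiable (by simp)) t).hasDerivAt
  have hbd : HasDerivAt b (deriv b t) t := ((hb1.differentiable (by simp)) t).hasDerivAt
  have hξd : HasDerivAt ξ (deriv ξ t) t := ((hξ1.differentiable (by simp)) t).hasDerivAt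
  have hPder : HasDerivAt P
      (ε / 4 * ((deriv (deriv η) t * η t - deriv η t * deriv η t) / (η t) ^ 2 - deriv b t)) t := by
    rw [hP]
    exact ((hDηd.div hηd (hη0 t)).sub hbd).const_mul (ε / 4)
  have hQder : HasDerivAt Q ((deriv ξ t * η t - ξ t * deriv η t) / (η t) ^ 2) t := by
    rw [hQ]
    exact hξd.div hηd (hη0 t)
  have hAd : DifferentiableAt ℝ A t := by
    rw [hA]
    exact ((hc1'.differentiable (by simp)) t).neg.add
      (((((hDb.differentiable (by simp)) t).add
        (((hb1.differentiable (by simp)) t).pow 2)).sub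
        (((hDDη.differentiable (by simp)) t).div ((hη1.differentiable (by simp)) t)
          (hη0 t))).const_mul (ε / 4))
  have hBd : DifferentiableAt ℝ B t := by
    rw [hB]
    exact ((hDξ.differentiable (by simp)) t).div ((hη1.differentiable (by simp)) t) (hη0 t)
  -- first x-derivative
  have hpx : ∀ x y s, px u x y s = qz F (x + P s * y ^ 2 - Q s * y) s := by
    intro x y s
    rw [px, show (fun r => u r y s)
        = fun r => (A s * y ^ 2 + B s * y) + F (r + P s * y ^ 2 - Q s * y) s from
      funext fun r => by rw [hu']]
    rw [deriv_const_add]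
    exact (hderx F hF' (P s * y ^ 2) (Q s * y) s x).deriv
  have hpxx : ∀ x y s, px (px u) x y s = qz (qz F) (x + P s * y ^ 2 - Q s * y) s := by
    intro x y s
    rw [px, show (fun r => px u r y s) = fun r => qz F (r + P s * y ^ 2 - Q s * y) s from
      funext fun r => hpx r y s]
    exact (hderx (qz F) hF1 (P s * y ^ 2) (Q s * y) s x).deriv
  have hpxxx : ∀ x y s, px (px (px u)) x y s
      = qz (qz (qz F)) (x + P s * y ^ 2 - Q s * y) s := by
    intro x y s
    rw [px, show (fun r => px (px u) r y s)
        = fun r => qz (qz F) (r + P s * y ^ 2 - Q s * y) s from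
      funext fun r => hpxx r y s]
    exact (hderx (qz (qz F)) hF2 (P s * y ^ 2) (Q s * y) s x).deriv
  -- y-derivatives
  have hpy : ∀ x y s, py u x y s
      = 2 * A s * y + B s + qz F (x + P s * y ^ 2 - Q s * y) s * (2 * P s * y - Q s) := by
    intro x y s
    rw [py, show (fun r => u x r s)
        = fun r => A s * r ^ 2 + B s * r + F (x + P s * r ^ 2 - Q s * r) s from
      funext fun r => by rw [hu']]
    have H : HasDerivAt (fun r => A s * r ^ 2 + B s * r + F (x + P s * r ^ 2 - Q s * r) s)
        (A s * ((2 : ℕ) * y ^ (2 - 1)) + B s * 1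
          + qz F (x + P s * y ^ 2 - Q s * y) s * (2 * P s * y - Q s)) y :=
      (((hasDerivAt_pow 2 y).const_mul (A s)).add
        ((hasDerivAt_id y).const_mul (B s))).add (hdery F hF' x (P s) (Q s) s y)
    rw [H.deriv]
    push_cast
    ring
  have hpyy : py (py u) x y t
      = 2 * A t + qz (qz F) (x + P t * y ^ 2 - Q t * y) t * (2 * P t * y - Q t) ^ 2
        + qz F (x + P t * y ^ 2 - Q t * y) t * (2 * P t) := by
    rw [py, show (fun r => py u x r t)
        = fun r => 2 * A t * r + B t
          + qz F (x + P t * r ^ 2 - Q t * r) t * (2 * P t * r - Q t) from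
      funext fun r => hpy x r t]
    have Hlin : HasDerivAt (fun r : ℝ => 2 * A t * r + B t) (2 * A t) y := by
      simpa using ((hasDerivAt_id y).const_mul (2 * A t)).add_const (B t)
    have Hm : HasDerivAt (fun r : ℝ => 2 * P t * r - Q t) (2 * P t) y := by
      simpa using ((hasDerivAt_id y).const_mul (2 * P t)).sub_const (Q t)
    have H : HasDerivAt (fun r => 2 * A t * r + B t
          + qz F (x + P t * r ^ 2 - Q t * r) t * (2 * P t * r - Q t))
        (2 * A t + (qz (qz F) (x + P t * y ^ 2 - Q t * y) t * (2 * P t * y - Q t)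
            * (2 * P t * y - Q t)
          + qz F (x + P t * y ^ 2 - Q t * y) t * (2 * P t))) y :=
      Hlin.add ((hdery (qz F) hF1 x (P t) (Q t) t y).mul Hm)
    rw [H.deriv]
    ring
  have hpxy : px (py u) x y t
      = qz (qz F) (x + P t * y ^ 2 - Q t * y) t * (2 * P t * y - Q t) := by
    rw [px, show (fun r => py u r y t)
        = fun r => (2 * A t * y + B t)
          + qz F (r + P t * y ^ 2 - Q t * y) t * (2 * P t * y - Q t) from
      funext fun r => by rw [hpy r y t]]
    have H : HasDerivAt (fun r => (2 * A t * y + B t)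
          + qz F (r + P t * y ^ 2 - Q t * y) t * (2 * P t * y - Q t))
        (qz (qz F) (x + P t * y ^ 2 - Q t * y) t * (2 * P t * y - Q t)) x :=
      ((hderx (qz F) hF1 (P t * y ^ 2) (Q t * y) t x).mul_const
        (2 * P t * y - Q t)).const_add (2 * A t * y + B t)
    rw [H.deriv]
  -- t-derivative
  have hpt : ∀ x', pt u x' y t
      = deriv A t * y ^ 2 + deriv B t * y
        + (qz F (x' + P t * y ^ 2 - Q t * y) t
            * ((ε / 4 * ((deriv (deriv η) t * η t - deriv η t * deriv η t) / (η t) ^ 2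
                - deriv b t)) * y ^ 2
              - (deriv ξ t * η t - ξ t * deriv η t) / (η t) ^ 2 * y)
          + qt F (x' + P t * y ^ 2 - Q t * y) t) := by
    intro x'
    rw [pt, show (fun r => u x' y r)
        = fun r => A r * y ^ 2 + B r * y + F (x' + P r * y ^ 2 - Q r * y) r from
      funext fun r => by rw [hu']]
    have hzc : HasDerivAt (fun r => x' + P r * y ^ 2 - Q r * y)
        ((ε / 4 * ((deriv (deriv η) t * η t - deriv η t * deriv η t) / (η t) ^ 2
            - deriv b t)) * y ^ 2
          - (deriv ξ t * η t - ξ t * deriv η t) / (η t) ^ 2 * y) t :=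
      ((hPder.mul_const (y ^ 2)).const_add x').sub (hQder.mul_const y)
    have H : HasDerivAt (fun r => A r * y ^ 2 + B r * y + F (x' + P r * y ^ 2 - Q r * y) r)
        (deriv A t * y ^ 2 + deriv B t * y
          + (qz F (x' + P t * y ^ 2 - Q t * y) t
              * ((ε / 4 * ((deriv (deriv η) t * η t - deriv η t * deriv η t) / (η t) ^ 2
                  - deriv b t)) * y ^ 2
                - (deriv ξ t * η t - ξ t * deriv η t) / (η t) ^ 2 * y)
            + qt F (x' + P t * y ^ 2 - Q t * y) t * 1)) t :=
      ((hAd.hasDerivAt.mul_const (y ^ 2)).add (hBd.hasDerivAt.mul_const y)).add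
        (chain2 hF' hzc (hasDerivAt_id t))
    rw [H.deriv]
    ring
  -- the first (outer px) term
  have hterm1 :
      px (fun x y t => pt u x y t + u x y t * px u x y t + px (px (px u)) x y t) x y t
      = ((qz (qz F) (x + P t * y ^ 2 - Q t * y) t
            * ((ε / 4 * ((deriv (deriv η) t * η t - deriv η t * deriv η t) / (η t) ^ 2
                - deriv b t)) * y ^ 2
              - (deriv ξ t * η t - ξ t * deriv η t) / (η t) ^ 2 * y)
          + qz (qt F) (x + P t * y ^ 2 - Q t * y) t)
        + (qz F (x + P t * y ^ 2 - Q t * y) t * qz F (x + P t * y ^ 2 - Q t * y) t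
          + (A t * y ^ 2 + B t * y + F (x + P t * y ^ 2 - Q t * y) t)
            * qz (qz F) (x + P t * y ^ 2 - Q t * y) t))
        + qz (qz (qz (qz F))) (x + P t * y ^ 2 - Q t * y) t := by
    rw [px]
    show deriv (fun r => pt u r y t + u r y t * px u r y t + px (px (px u)) r y t) x = _
    rw [show (fun r => pt u r y t + u r y t * px u r y t + px (px (px u)) r y t)
        = fun r =>
          ((deriv A t * y ^ 2 + deriv B t * y)
            + (qz F (r + P t * y ^ 2 - Q t * y) t
                * ((ε / 4 * ((deriv (deriv η) t * η t - deriv η t * deriv η t) / (η t) ^ 2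
                    - deriv b t)) * y ^ 2
                  - (deriv ξ t * η t - ξ t * deriv η t) / (η t) ^ 2 * y)
              + qt F (r + P t * y ^ 2 - Q t * y) t))
          + ((A t * y ^ 2 + B t * y) + F (r + P t * y ^ 2 - Q t * y) t)
              * qz F (r + P t * y ^ 2 - Q t * y) t
          + qz (qz (qz F)) (r + P t * y ^ 2 - Q t * y) t from
      funext fun r => by rw [hpt r, hpx r y t, hpxxx r y t, hu']]
    have H1 := (((hderx (qz F) hF1 (P t * y ^ 2) (Q t * y) t x).mul_const
      ((ε / 4 * ((deriv (deriv η) t * η t - deriv η t * deriv η t) / (η t) ^ 2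
          - deriv b t)) * y ^ 2
        - (deriv ξ t * η t - ξ t * deriv η t) / (η t) ^ 2 * y)).add
      (hderx (qt F) hFt (P t * y ^ 2) (Q t * y) t x)).const_add
      (deriv A t * y ^ 2 + deriv B t * y)
    have H2 := ((hderx F hF' (P t * y ^ 2) (Q t * y) t x).const_add
      (A t * y ^ 2 + B t * y)).mul (hderx (qz F) hF1 (P t * y ^ 2) (Q t * y) t x)
    have H : HasDerivAt (fun r =>
          ((deriv A t * y ^ 2 + deriv B t * y)
            + (qz F (r + P t * y ^ 2 - Q t * y) t
                * ((ε / 4 * ((deriv (deriv η) t * η t - deriv η t * deriv η t) / (η t) ^ 2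
                    - deriv b t)) * y ^ 2
                  - (deriv ξ t * η t - ξ t * deriv η t) / (η t) ^ 2 * y)
              + qt F (r + P t * y ^ 2 - Q t * y) t))
          + ((A t * y ^ 2 + B t * y) + F (r + P t * y ^ 2 - Q t * y) t)
              * qz F (r + P t * y ^ 2 - Q t * y) t
          + qz (qz (qz F)) (r + P t * y ^ 2 - Q t * y) t)
        ((qz (qz F) (x + P t * y ^ 2 - Q t * y) t
            * ((ε / 4 * ((deriv (deriv η) t * η t - deriv η t * deriv η t) / (η t) ^ 2
                - deriv b t)) * y ^ 2
              - (deriv ξ t * η t - ξ t * deriv η t) / (η t) ^ 2 * y)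
          + qz (qt F) (x + P t * y ^ 2 - Q t * y) t)
        + (qz F (x + P t * y ^ 2 - Q t * y) t
            * qz F (x + P t * y ^ 2 - Q t * y) t
          + ((A t * y ^ 2 + B t * y) + F (x + P t * y ^ 2 - Q t * y) t)
            * qz (qz F) (x + P t * y ^ 2 - Q t * y) t)
        + qz (qz (qz (qz F))) (x + P t * y ^ 2 - Q t * y) t) x :=
      (H1.add H2).add (hderx (qz (qz (qz F))) hF3 (P t * y ^ 2) (Q t * y) t x)
    rw [H.deriv]
  -- expand the reduced equation
  have hqsum : ∀ z s : ℝ,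
      qz (fun z t => qt F z t + F z t * qz F z t + qz (qz (qz F)) z t) z s
      = qz (qt F) z s + (qz F z s * qz F z s + F z s * qz (qz F) z s)
        + qz (qz (qz (qz F))) z s := by
    intro z s
    rw [qz]
    have H := ((hderz (qt F) hFt z s).add
      ((hderz F hF' z s).mul (hderz (qz F) hF1 z s))).add
      (hderz (qz (qz (qz F))) hF3 z s)
    exact H.deriv
  have key := hred (x + P t * y ^ 2 - Q t * y) t
  rw [hqsum] at key
  -- coefficient identities
  have hco1 : A t * y ^ 2 + B t * y
      + ((ε / 4 * ((deriv (deriv η) t * η t - deriv η t * deriv η t) / (η t) ^ 2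
          - deriv b t)) * y ^ 2
        - (deriv ξ t * η t - ξ t * deriv η t) / (η t) ^ 2 * y)
      + ε * (2 * P t * y - Q t) ^ 2 - ε * ((ξ t) ^ 2 / (η t) ^ 2)
      + b t * y * (2 * P t * y - Q t) + c t * y ^ 2 = 0 := by
    simp only [hP, hQ, hA, hB]
    have h0 := hη0 t
    rcases hε with rfl | rfl <;> field_simp <;> ring
  have hco2 : ε * (2 * P t) - 1 / 2 * (deriv η t / η t - b t) = 0 := by
    simp only [hP]
    have h0 := hη0 t
    rcases hε with rfl | rfl <;> field_simp <;> ring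
  have hco3 : ε * (2 * A t) + 2 * c t * ε
      - 1 / 2 * (deriv b t + (b t) ^ 2 - deriv (deriv η) t / η t) = 0 := by
    simp only [hA]
    have h0 := hη0 t
    rcases hε with rfl | rfl <;> field_simp <;> ring
  rw [hterm1, hpyy, hpxy, hpxx x y t]
  linear_combination key + qz (qz F) (x + P t * y ^ 2 - Q t * y) t * hco1
    + qz F (x + P t * y ^ 2 - Q t * y) t * hco2 + hco3
end
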